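/- Let v₁, …, v_n : Ω → [-1, 1] be measurable functions on a probability space, let S = (ω₁, …, ω_N) be points of Ω, and let ε₁, …, ε_N be i.i.d. Rademacher random variables. Then the empirical Rademacher complexity of the finite class satisfies E[ max_{1 ≤ i ≤ n} | (1/N) Σ_{j=1}^N ε_j v_i(ω_j) | ] ≤ √(2 log(2n) / N). (Massart's finite class lemma applied to functions bounded by 1.) -/

import Mathlib

/-!
Each Rademacher average `(1/N) ∑ⱼ εⱼ vᵢ(ωⱼ)` has moment generating function
`∏ⱼ cosh (t vᵢ(ωⱼ)/N) ≤ exp (t²/(2N))`, so it and its negative are sub-Gaussian with variance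
proxy `1/N`. For finitely many sub-Gaussian `Y₁, …, Y_m`, Jensen's inequality gives
`exp (t 𝔼 maxₖ Yₖ) ≤ 𝔼 exp (t maxₖ Yₖ) ≤ ∑ₖ 𝔼 exp (t Yₖ) ≤ m exp (t²/(2N))`, that is
`𝔼 maxₖ Yₖ ≤ (log m + t²/(2N)) / t` for every `t > 0`. Apply this to the `2n` variables
`±(1/N) ∑ⱼ εⱼ vᵢ(ωⱼ)` and choose `t = √(2N log (2n))`.
-/

open MeasureTheory ProbabilityTheory Real Finset
open scoped NNReal ENNReal

namespace ProbabilityTheory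

lemma HasSubgaussianMGF.mono {Ω : Type*} [MeasurableSpace Ω] {μ : Measure Ω} {X : Ω → ℝ}
    {c d : ℝ≥0} (h : HasSubgaussianMGF X c μ) (hcd : c ≤ d) : HasSubgaussianMGF X d μ where
  integrable_exp_mul := h.integrable_exp_mul
  mgf_le t := (h.mgf_le t).trans <| exp_le_exp.mpr <| by gcongr

def rademacherSum {ι : Type*} [Fintype ι] (c : ι → ℝ) (ε : ι → Bool) : ℝ :=
  ∑ j, (if ε j then 1 else -1) * c j

section Rademacher

variable {ι : Type*} [Fintype ι] [DecidableEq ι]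

lemma mgf_rademacherSum (c : ι → ℝ) (t : ℝ) :
    mgf (rademacherSum c) (PMF.uniformOfFintype (ι → Bool)).toMeasure t = ∏ j, cosh (t * c j) := by
  have hsplit : ∀ ε : ι → Bool, exp (t * rademacherSum c ε)
      = ∏ j, exp (t * ((if ε j then 1 else -1) * c j)) := fun ε => by
    rw [rademacherSum, mul_sum, exp_sum]
  simp only [mgf, PMF.integral_eq_sum, PMF.uniformOfFintype_apply, Fintype.card_fun,
    Fintype.card_bool, hsplit]
  have hweight : (((2 ^ Fintype.card ι : ℕ) : ℝ≥0∞)⁻¹).toReal = ∏ _j : ι, (2 : ℝ)⁻¹ := by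
    simp [prod_const, ENNReal.toReal_inv]
  simp_rw [hweight, smul_eq_mul, ← prod_mul_distrib]
  rw [← Fintype.prod_sum fun j (b : Bool) => 2⁻¹ * exp (t * ((if b then 1 else -1) * c j))]
  refine prod_congr rfl fun j _ => ?_
  rw [Fintype.sum_bool, cosh_eq]
  simp only [if_true, Bool.false_eq_true, if_false]
  ring_nf

lemma hasSubgaussianMGF_rademacherSum (c : ι → ℝ) :
    HasSubgaussianMGF (rademacherSum c) ⟨∑ j, c j ^ 2, by positivity⟩
      (PMF.uniformOfFintype (ι → Bool)).toMeasure where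
  integrable_exp_mul _ := .of_finite
  mgf_le t := by
    rw [mgf_rademacherSum]
    calc ∏ j, cosh (t * c j) ≤ ∏ j, exp ((t * c j) ^ 2 / 2) :=
          prod_le_prod (fun j _ => (cosh_pos _).le) fun j _ => cosh_le_exp_half_sq _
      _ = exp ((∑ j, c j ^ 2) * t ^ 2 / 2) := by
          rw [← exp_sum, sum_mul, sum_div]
          exact congrArg exp (sum_congr rfl fun j _ => by ring)

lemma hasSubgaussianMGF_rademacherAverage {c : ι → ℝ} (hc : ∀ j, |c j| ≤ 1) :
    HasSubgaussianMGF (fun ε => (1 / Fintype.card ι : ℝ) * rademacherSum c ε)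
      (Fintype.card ι : ℝ≥0)⁻¹ (PMF.uniformOfFintype (ι → Bool)).toMeasure := by
  refine ((hasSubgaussianMGF_rademacherSum c).const_mul _).mono (NNReal.coe_le_coe.mp ?_)
  have hsq : ∑ j, c j ^ 2 ≤ Fintype.card ι := calc
    _ ≤ ∑ _j : ι, (1 : ℝ) := sum_le_sum fun j _ => (sq_le_one_iff_abs_le_one _).mpr (hc j)
    _ = Fintype.card ι := by simp
  calc ((1 / (Fintype.card ι : ℝ)) ^ 2 * ∑ j, c j ^ 2 : ℝ)
      ≤ (1 / Fintype.card ι) ^ 2 * Fintype.card ι := by gcongr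
    _ = (Fintype.card ι : ℝ)⁻¹ := by
      rw [div_pow, one_pow, sq, one_div_mul_eq_div, div_self_mul_self']
    _ = (((Fintype.card ι : ℝ≥0)⁻¹ : ℝ≥0) : ℝ) := by simp

end Rademacher

section Maximal

variable {Ω : Type*} [MeasurableSpace Ω] {μ : Measure Ω} [IsProbabilityMeasure μ]
  {κ : Type*} {s : Finset κ} {X : κ → Ω → ℝ} {c : ℝ≥0}

theorem integral_sup'_le_of_hasSubgaussianMGF (hs : s.Nonempty)
    (hX : ∀ i ∈ s, HasSubgaussianMGF (X i) c μ) {t : ℝ} (ht : 0 < t) :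
    ∫ ω, s.sup' hs (X · ω) ∂μ ≤ (log #s + c * t ^ 2 / 2) / t := by
  set Y : Ω → ℝ := fun ω => s.sup' hs (X · ω)
  have hY : Integrable Y μ := by
    have : Integrable (s.sup' hs X) μ :=
      sup'_induction hs X (p := (Integrable · μ)) (fun _ hf _ hg => hf.sup hg)
        fun i hi => (hX i hi).integrable
    convert this using 1
    exact funext fun ω => (Finset.sup'_apply hs X ω).symm
  have hexpY (ω : Ω) : exp (t * Y ω) ≤ ∑ i ∈ s, exp (t * X i ω) := by
    obtain ⟨i, hi, hYi⟩ := exists_mem_eq_sup' hs (X · ω)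
    rw [show Y ω = X i ω from hYi]
    exact single_le_sum (f := fun i => exp (t * X i ω)) (fun _ _ => (exp_pos _).le) hi
  have hsum : Integrable (fun ω => ∑ i ∈ s, exp (t * X i ω)) μ :=
    integrable_finsetSum _ fun i hi => (hX i hi).integrable_exp_mul t
  have hexpY_int : Integrable (fun ω => exp (t * Y ω)) μ :=
    hsum.mono' (continuous_exp.comp_aestronglyMeasurable (hY.const_mul t).aestronglyMeasurable)
      (.of_forall fun ω => by rw [norm_of_nonneg (exp_pos _).le]; exact hexpY ω)
  have jensen : exp (t * ∫ ω, Y ω ∂μ) ≤ ∫ ω, exp (t * Y ω) ∂μ := by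
    rw [← integral_const_mul]
    exact convexOn_exp.map_integral_le continuousOn_exp isClosed_univ (.of_forall fun _ => trivial)
      (hY.const_mul t) hexpY_int
  have hmgf : exp (t * ∫ ω, Y ω ∂μ) ≤ exp (log #s + c * t ^ 2 / 2) := by
    rw [exp_add, exp_log (by exact_mod_cast hs.card_pos)]
    calc exp (t * ∫ ω, Y ω ∂μ) ≤ ∫ ω, ∑ i ∈ s, exp (t * X i ω) ∂μ :=
          jensen.trans (integral_mono hexpY_int hsum hexpY)
      _ = ∑ i ∈ s, mgf (X i) μ t := integral_finsetSum _ fun i hi => (hX i hi).integrable_exp_mul t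
      _ ≤ ∑ _i ∈ s, exp (c * t ^ 2 / 2) := sum_le_sum fun i hi => (hX i hi).mgf_le t
      _ = #s * exp (c * t ^ 2 / 2) := by rw [sum_const, nsmul_eq_mul]
  rw [le_div_iff₀ ht, mul_comm]
  exact exp_le_exp.mp hmgf

theorem integral_sup'_abs_le_of_hasSubgaussianMGF (hs : s.Nonempty)
    (hX : ∀ i ∈ s, HasSubgaussianMGF (X i) c μ) {t : ℝ} (ht : 0 < t) :
    ∫ ω, s.sup' hs (|X · ω|) ∂μ ≤ (log (2 * #s) + c * t ^ 2 / 2) / t := by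
  have hs₂ : (s ×ˢ (univ : Finset Bool)).Nonempty := hs.product univ_nonempty
  have hX₂ : ∀ p ∈ s ×ˢ (univ : Finset Bool),
      HasSubgaussianMGF (fun ω => if p.2 then X p.1 ω else -X p.1 ω) c μ := by
    rintro ⟨i, b⟩ hp
    cases b
    · exact (hX i (mem_product.mp hp).1).neg
    · exact hX i (mem_product.mp hp).1
  have habs (ω : Ω) : s.sup' hs (|X · ω|) =
      (s ×ˢ (univ : Finset Bool)).sup' hs₂ fun p => if p.2 then X p.1 ω else -X p.1 ω := by
    rw [sup'_product_left]
    refine sup'_congr hs rfl fun i _ => ?_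
    simp only [abs_eq_max_neg, Fintype.univ_bool, singleton_nonempty, sup'_insert, reduceIte,
      sup'_singleton, Bool.false_eq_true]
  simp_rw [habs]
  convert integral_sup'_le_of_hasSubgaussianMGF hs₂ hX₂ ht using 3
  simp [card_product, mul_comm]

end Maximal

end ProbabilityTheory

/-- Massart's finite class lemma: for functions `v₁,…,v_n` bounded by `1`, fixed sample
points `ω₁,…,ω_N`, and i.i.d. Rademacher signs (modeled by the uniform distribution on
`Fin N → Bool`), the expected maximal absolute Rademacher average is at most
`√(2 log(2n)/N)`. -/
theorem stmt_11 {Ω : Type*} (n N : ℕ) (hn : 0 < n) (hN : 0 < N)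
    (v : Fin n → Ω → ℝ) (hv : ∀ i ω, v i ω ∈ Set.Icc (-1 : ℝ) 1)
    (ωs : Fin N → Ω) :
    ∫ ε : Fin N → Bool,
        (Finset.univ.sup' (Finset.univ_nonempty_iff.mpr (Fin.pos_iff_nonempty.mp hn))
          fun i : Fin n =>
            |(1 / (N : ℝ)) * ∑ j : Fin N, (if ε j then (1 : ℝ) else -1) * v i (ωs j)|)
        ∂(PMF.uniformOfFintype (Fin N → Bool)).toMeasure
      ≤ Real.sqrt (2 * Real.log (2 * n) / N) := by
  have hNpos : (0 : ℝ) < N := by exact_mod_cast hN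
  have hlog : 0 < Real.log (2 * n) := Real.log_pos (by norm_cast; omega)
  have ht : 0 < Real.sqrt (2 * N * Real.log (2 * n)) := by positivity
  have hX (i : Fin n) (_ : i ∈ Finset.univ) : HasSubgaussianMGF
      (fun ε => (1 / (N : ℝ)) * rademacherSum (fun j => v i (ωs j)) ε) (N : ℝ≥0)⁻¹
      (PMF.uniformOfFintype (Fin N → Bool)).toMeasure := by
    simpa only [Fintype.card_fin] using
      hasSubgaussianMGF_rademacherAverage fun j => abs_le.mpr (hv i (ωs j))
  refine (integral_sup'_abs_le_of_hasSubgaussianMGF _ hX ht).trans_eq ?_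
  rw [Finset.card_univ, Fintype.card_fin, NNReal.coe_inv, NNReal.coe_natCast,
    Real.sq_sqrt (by positivity), eq_comm, Real.sqrt_eq_iff_eq_sq (by positivity) (by positivity),
    div_pow, Real.sq_sqrt (by positivity)]
  field_simp
  ring
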